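/- arXiv:1903.02799 — 6 statements merged into one kernel-verified Lean document; each statement's English description precedes it below -/
import Mathlib

section
/- Let X be a real normed vector space and m : X → ℝ three times continuously Fréchet differentiable. Then for all x, e ∈ X: m(x + e) − m(x) = (1/2)(Dm(x)(e) + Dm(x+e)(e)) + (1/2) ∫₀¹ D³m(x + s·e)(e, e, e) · s(s−1) ds. -/
/-!
Restricted to the segment, `g s = m (x + s • e)` has `g⁽ᵏ⁾ s = Dᵏm (x + s • e) (e, …, e)`, so it
suffices to prove the one-dimensional trapezoidal rule. For that, integrate `g'''` against the
weight `(s - a)(s - b)`, which vanishes at both ends: two integrations by parts, packaged as a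
single explicit antiderivative, leave exactly the trapezoidal sum.
-/

open intervalIntegral

theorem iteratedDeriv_comp_add_smul {𝕜 E F : Type*} [NontriviallyNormedField 𝕜]
    [NormedAddCommGroup E] [NormedSpace 𝕜 E] [NormedAddCommGroup F] [NormedSpace 𝕜 F]
    {n : WithTop ℕ∞} {f : E → F} (hf : ContDiff 𝕜 n f) (x e : E) {k : ℕ} (hk : k ≤ n) (t : 𝕜) :
    iteratedDeriv k (fun s : 𝕜 => f (x + s • e)) t
      = iteratedFDeriv 𝕜 k f (x + t • e) fun _ => e := by
  have hline : (fun s : 𝕜 => f (x + s • e))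
      = (fun z => f (x + z)) ∘ ContinuousLinearMap.smulRight (1 : 𝕜 →L[𝕜] 𝕜) e := by
    ext s
    simp
  have hshift : ContDiff 𝕜 n fun z => f (x + z) := hf.comp (contDiff_const.add contDiff_id)
  rw [iteratedDeriv_eq_iteratedFDeriv, hline,
    ContinuousLinearMap.iteratedFDeriv_comp_right _ hshift t hk,
    ContinuousMultilinearMap.compContinuousLinearMap_apply, iteratedFDeriv_comp_add_left]
  simp

theorem hasDerivAt_trapezoidal_antiderivative {F : Type*} [NormedAddCommGroup F]
    [NormedSpace ℝ F] {g : ℝ → F} (hg : ContDiff ℝ 3 g) (a b s : ℝ) :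
    HasDerivAt (fun s => ((s - a) * (s - b)) • iteratedDeriv 2 g s
        - (2 * s - a - b) • deriv g s + (2 : ℝ) • g s)
      (((s - a) * (s - b)) • iteratedDeriv 3 g s) s := by
  have hg' (k : ℕ) (hk : k < 3) : HasDerivAt (iteratedDeriv k g) (iteratedDeriv (k + 1) g s) s := by
    rw [iteratedDeriv_succ]
    exact (hg.differentiable_iteratedDeriv k (by exact_mod_cast hk) s).hasDerivAt
  have hw : HasDerivAt (fun s => (s - a) * (s - b)) (2 * s - a - b) s :=
    (((hasDerivAt_id' s).sub_const a).fun_mul ((hasDerivAt_id' s).sub_const b)).congr_deriv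
      (by ring)
  have hw' : HasDerivAt (fun s => 2 * s - a - b) 2 s := by
    simpa using (((hasDerivAt_id s).const_mul 2).sub_const a).sub_const b
  convert ((hw.smul (hg' 2 (by norm_num))).sub (hw'.smul (hg' 1 (by norm_num)))).add
    ((hg' 0 (by norm_num)).const_smul (2 : ℝ)) using 1
  · ext
    simp [iteratedDeriv_one]
  · simp only [Nat.reduceAdd, iteratedDeriv_one, zero_add]
    module

theorem trapezoidal_rule {F : Type*} [NormedAddCommGroup F] [NormedSpace ℝ F] [CompleteSpace F]
    {g : ℝ → F} (hg : ContDiff ℝ 3 g) (a b : ℝ) :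
    g b - g a = ((b - a) / 2) • (deriv g a + deriv g b)
      + (1 / 2 : ℝ) • ∫ s in a..b, ((s - a) * (s - b)) • iteratedDeriv 3 g s := by
  have hw : Continuous fun s : ℝ => (s - a) * (s - b) := by fun_prop
  rw [integral_eq_sub_of_hasDerivAt (fun s _ => hasDerivAt_trapezoidal_antiderivative hg a b s)
    ((hw.smul (hg.continuous_iteratedDeriv 3 le_rfl)).intervalIntegrable _ _)]
  simp only [sub_self, zero_mul, mul_zero, zero_smul]
  module

/-- Trapezoidal-rule identity with third-derivative remainder along a segment:
for `m : X → ℝ` three times continuously Fréchet differentiable on a real normed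
vector space `X`, and all `x, e ∈ X`,
`m(x+e) − m(x) = (1/2)(Dm(x)(e) + Dm(x+e)(e)) + (1/2)∫₀¹ D³m(x+s•e)(e,e,e) s(s−1) ds`. -/
theorem trapezoidal_rule_frechet_third_derivative_remainder
    (X : Type*) [NormedAddCommGroup X] [NormedSpace ℝ X]
    (m : X → ℝ) (hm : ContDiff ℝ 3 m) (x e : X) :
    m (x + e) - m x
      = (1 / 2) * (fderiv ℝ m x e + fderiv ℝ m (x + e) e)
        + (1 / 2) * ∫ s in (0:ℝ)..1,
            (iteratedFDeriv ℝ 3 m (x + s • e) fun _ => e) * (s * (s - 1)) := by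
  have hderiv (t : ℝ) : deriv (fun s : ℝ => m (x + s • e)) t = fderiv ℝ m (x + t • e) e := by
    simpa using iteratedDeriv_comp_add_smul hm x e (k := 1) (by norm_num) t
  have h := trapezoidal_rule (hm.comp (by fun_prop : ContDiff ℝ 3 fun s : ℝ => x + s • e)) 0 1
  simp only [Function.comp_def, zero_smul, add_zero, one_smul, sub_zero, smul_eq_mul, hderiv,
    iteratedDeriv_comp_add_smul hm x e le_rfl] at h
  rw [h]
  simp only [mul_comm]
end

section
/- Let X be a real normed vector space and m : X → ℝ three times continuously Fréchet differentiable. Let x, e ∈ X and suppose Dm(x + e)(e) = 0. Then m(x + e) − m(x) = (1/2) Dm(x)(e) + (1/2) ∫₀¹ D³m(x + s·e)(e, e, e) · s(s−1) ds. -/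
/-!
Restrict `m` to the line `g s = m (x + s • e)`, whose `k`-th derivative is
`Dᵏm(x + s • e)(e, …, e)`. Integrating `g'''` twice by parts against the weight `s (s - 1)`,
which vanishes at both endpoints, gives the trapezoidal rule with integral remainder
`g 1 - g 0 = (g' 0 + g' 1) / 2 + (1/2) ∫₀¹ g''' s (s - 1) ds`, and `g' 1 = 0` at a critical endpoint.
-/

open intervalIntegral Interval

theorem trapezoidal_rule_integral_remainder {g g₁ g₂ g₃ : ℝ → ℝ} {a b : ℝ}
    (hg : ∀ s ∈ [[a, b]], HasDerivAt g (g₁ s) s)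
    (hg₁ : ∀ s ∈ [[a, b]], HasDerivAt g₁ (g₂ s) s)
    (hg₂ : ∀ s ∈ [[a, b]], HasDerivAt g₂ (g₃ s) s)
    (hg₃ : IntervalIntegrable g₃ MeasureTheory.volume a b) :
    g b - g a = (b - a) / 2 * (g₁ a + g₁ b) + 1 / 2 * ∫ s in a..b, g₃ s * ((s - a) * (s - b)) := by
  have hw : ∀ s ∈ [[a, b]], HasDerivAt (fun t => (t - a) * (t - b)) (2 * s - a - b) s :=
    fun s _ => (((hasDerivAt_id s).sub_const a).mul ((hasDerivAt_id s).sub_const b)).congr_deriv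
      (by simp only [id]; ring)
  have hw' : ∀ s ∈ [[a, b]], HasDerivAt (fun t => 2 * t - a - b) 2 s :=
    fun s _ => (((hasDerivAt_id s).const_mul 2).sub_const a).sub_const b |>.congr_deriv (mul_one 2)
  have ftc : ∫ s in a..b, g₁ s = g b - g a :=
    integral_eq_sub_of_hasDerivAt hg (HasDerivAt.continuousOn hg₁).intervalIntegrable
  have ibp₁ : ∫ s in a..b, (s - a) * (s - b) * g₃ s = -∫ s in a..b, (2 * s - a - b) * g₂ s := by
    rw [integral_mul_deriv_eq_deriv_mul hw hg₂
      ((by fun_prop : Continuous fun s : ℝ => 2 * s - a - b).intervalIntegrable a b) hg₃]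
    ring
  have ibp₂ : ∫ s in a..b, (2 * s - a - b) * g₂ s
      = (b - a) * (g₁ a + g₁ b) - 2 * (g b - g a) := by
    rw [integral_mul_deriv_eq_deriv_mul hw' hg₁ intervalIntegrable_const
      (HasDerivAt.continuousOn hg₂).intervalIntegrable, integral_const_mul, ftc]
    ring
  have hcomm : ∫ s in a..b, g₃ s * ((s - a) * (s - b)) = ∫ s in a..b, (s - a) * (s - b) * g₃ s :=
    integral_congr fun s _ => mul_comm _ _
  rw [hcomm, ibp₁, ibp₂]
  ring

theorem ContDiff.hasDerivAt_iteratedFDeriv_add_smul {𝕜 E F : Type*} [NontriviallyNormedField 𝕜]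
    [NormedAddCommGroup E] [NormedSpace 𝕜 E] [NormedAddCommGroup F] [NormedSpace 𝕜 F]
    {f : E → F} {n : WithTop ℕ∞} {k : ℕ} (hf : ContDiff 𝕜 n f) (hk : k + 1 ≤ n) (x y : E) (t : 𝕜) :
    HasDerivAt (fun s : 𝕜 => iteratedFDeriv 𝕜 k f (x + s • y) fun _ => y)
      (iteratedFDeriv 𝕜 (k + 1) f (x + t • y) fun _ => y) t := by
  have hdiff : Differentiable 𝕜 (iteratedFDeriv 𝕜 k f) :=
    hf.differentiable_iteratedFDeriv (lt_of_lt_of_le (by exact_mod_cast k.lt_add_one) hk)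
  rw [← (hf.contDiffAt.of_le (by exact_mod_cast hk)).deriv_fderiv_add_smul]
  exact DifferentiableAt.hasDerivAt (by fun_prop)

/-- If `m : X → ℝ` is `C³` and `Dm(x+e)(e) = 0`, then
`m(x+e) − m(x) = (1/2) Dm(x)(e) + (1/2)∫₀¹ D³m(x+s•e)(e,e,e) s(s−1) ds`. -/
theorem trapezoidal_rule_critical_endpoint
    (X : Type*) [NormedAddCommGroup X] [NormedSpace ℝ X]
    (m : X → ℝ) (hm : ContDiff ℝ 3 m) (x e : X)
    (hcrit : fderiv ℝ m (x + e) e = 0) :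
    m (x + e) - m x
      = (1 / 2) * fderiv ℝ m x e
        + (1 / 2) * ∫ s in (0:ℝ)..1,
            (iteratedFDeriv ℝ 3 m (x + s • e) fun _ => e) * (s * (s - 1)) := by
  set D : ℕ → ℝ → ℝ := fun k s => iteratedFDeriv ℝ k m (x + s • e) fun _ => e with hD
  have hderiv : ∀ k < 3, ∀ s ∈ [[(0:ℝ), 1]], HasDerivAt (D k) (D (k + 1) s) s :=
    fun k hk s _ => hm.hasDerivAt_iteratedFDeriv_add_smul (by exact_mod_cast hk) x e s
  have hD₃ : Continuous (D 3) := by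
    have := hm.continuous_iteratedFDeriv (m := 3) le_rfl
    fun_prop
  have key := trapezoidal_rule_integral_remainder (hderiv 0 (by norm_num)) (hderiv 1 (by norm_num))
    (hderiv 2 (by norm_num)) (hD₃.intervalIntegrable 0 1)
  simpa [hD, hcrit] using key
end

section
/- (Error Representation for the Reduced System) Let Q be a real normed vector space, j : Q → ℝ four times continuously Fréchet differentiable, and i : Q → ℝ three times continuously Fréchet differentiable. Suppose q̄ ∈ Q satisfies the first-order optimality condition Dj(q̄) = 0, and p̄ ∈ Q solves the reduced adjoint problem D²j(q̄)(δq, p̄) = −Di(q̄)(δq) for all δq ∈ Q. Then for arbitrary fixed q̃, p̃ ∈ Q, setting e := q̄ − q̃ and e* := p̄ − p̃, one has: i(q̄) − i(q̃) = (1/2)·Dj(q̃)(e*) + (1/2)·[Di(q̃)(e) + D²j(q̃)(e, p̃)] + Dj(q̃)(p̃) + R⁽³⁾, where R⁽³⁾ = (1/2) ∫₀¹ [ D³i(q̃ + s·e)(e, e, e) + D⁴j(q̃ + s·e)(e, e, e, p̃ + s·e*) + 3·D³j(q̃ + s·e)(e, e, e*) ] · s(s−1) ds. -/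
/-!
Along the segment `s ↦ (q̃ + s e, p̃ + s e*)` consider `g(s) = L(q̃ + s e, p̃ + s e*)` for the
reduced Lagrangian `L(q, p) = i(q) + Dj(q)(p)`. Since `Dj(q̄) = 0`, `g(1) - g(0)` equals
`i(q̄) - i(q̃) - Dj(q̃)(p̃)`. The trapezoidal rule with its exact Peano remainder,
`∫₀¹ g' = ½ (g'(0) + g'(1)) + ½ ∫₀¹ g'''(s) s (s - 1) ds`, then gives the representation:
`g'(1) = Di(q̄)(e) + D²j(q̄)(e, p̄) + Dj(q̄)(e*)` vanishes by the optimality and adjoint equations,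
`g'(0)` is the primal-dual residual, and `g'''` is the bracket in `R⁽³⁾`.
-/

open Interval MeasureTheory

section Tuples

variable {α : Type*} {n : ℕ}

@[simp]
theorem Fin.cons_self_const (a : α) : (Fin.cons a fun _ : Fin n => a) = fun _ => a :=
  Matrix.vecCons_const a

@[simp]
theorem Fin.snoc_const_zero (a b : α) : (Fin.snoc (fun _ : Fin 0 => a) b : Fin 1 → α) = ![b] := by
  ext k; fin_cases k; rfl

@[simp]
theorem Fin.snoc_const_succ (a b : α) :
    (Fin.snoc (fun _ : Fin (n + 1) => a) b : Fin (n + 2) → α)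
      = Matrix.vecCons a (Fin.snoc (fun _ : Fin n => a) b) := by
  rw [← Matrix.Fin.snoc_vecCons, Matrix.vecCons_const]

end Tuples

section LineDerivatives

variable {𝕜 : Type*} [NontriviallyNormedField 𝕜]
  {E : Type*} [NormedAddCommGroup E] [NormedSpace 𝕜 E]
  {F : Type*} [NormedAddCommGroup F] [NormedSpace 𝕜 F]
  {f : E → F} {n : ℕ}

theorem hasDerivAt_iteratedFDeriv_line (hf : ContDiff 𝕜 (n + 1) f) (c v : E) (m : Fin n → E)
    (s : 𝕜) :
    HasDerivAt (fun t => iteratedFDeriv 𝕜 n f (c + t • v) m)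
      (iteratedFDeriv 𝕜 (n + 1) f (c + s • v) (Fin.cons v m)) s := by
  have hline : HasDerivAt (fun t : 𝕜 => c + t • v) v s := by
    simpa using ((hasDerivAt_id s).smul_const v).const_add c
  have hD : DifferentiableAt 𝕜 (iteratedFDeriv 𝕜 n f) (c + s • v) :=
    (hf.differentiable_iteratedFDeriv (mod_cast Nat.lt_succ_self n)).differentiableAt
  simpa [iteratedFDeriv_succ_apply_left, Function.comp_def] using
    (ContinuousMultilinearMap.apply 𝕜 (fun _ : Fin n => E) F m).hasFDerivAt.comp_hasDerivAt s
      (hD.hasFDerivAt.comp_hasDerivAt s hline)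

theorem ContinuousMultilinearMap.snoc_add_smul
    (g : ContinuousMultilinearMap 𝕜 (fun _ : Fin (n + 1) => E) F) (m : Fin n → E) (p w : E)
    (t : 𝕜) : g (Fin.snoc m (p + t • w)) = g (Fin.snoc m p) + t • g (Fin.snoc m w) :=
  (g.toMultilinearMap.snoc_add m p (t • w)).trans
    (congrArg _ (g.toMultilinearMap.snoc_smul m t w))

theorem hasDerivAt_iteratedFDeriv_line_snoc (hf : ContDiff 𝕜 (n + 2) f) (c v p w : E)
    (m : Fin n → E) (s : 𝕜) :
    HasDerivAt (fun t => iteratedFDeriv 𝕜 (n + 1) f (c + t • v) (Fin.snoc m (p + t • w)))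
      (iteratedFDeriv 𝕜 (n + 2) f (c + s • v) (Fin.snoc (Fin.cons v m) (p + s • w))
        + iteratedFDeriv 𝕜 (n + 1) f (c + s • v) (Fin.snoc m w)) s := by
  have hp := hasDerivAt_iteratedFDeriv_line hf c v (Fin.snoc m p) s
  have hw := hasDerivAt_iteratedFDeriv_line hf c v (Fin.snoc m w) s
  convert hp.add ((hasDerivAt_id s).smul hw) using 1
  · ext t
    exact ContinuousMultilinearMap.snoc_add_smul _ m p w t
  · simp only [Fin.cons_snoc_eq_snoc_cons, ContinuousMultilinearMap.snoc_add_smul, id, one_smul]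
    abel

end LineDerivatives

theorem trapezoidal_error_one_eq_integral {h h' h'' : ℝ → ℝ} {a b : ℝ}
    (hh : ∀ x ∈ [[a, b]], HasDerivAt h (h' x) x) (hh' : ∀ x ∈ [[a, b]], HasDerivAt h' (h'' x) x)
    (hint : IntervalIntegrable h'' volume a b) :
    trapezoidal_error h 1 a b = -(1 / 2) * ∫ x in a..b, h'' x * ((x - a) * (x - b)) := by
  have hkernel : ∀ x ∈ [[a, b]], HasDerivAt (fun x => (x - a) * (x - b)) (2 * x - a - b) x := by
    intro x _
    refine (((hasDerivAt_id x).sub_const a).mul ((hasDerivAt_id x).sub_const b)).congr_deriv ?_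
    simp only [id, one_mul, mul_one]
    ring
  have hkernel' : ∀ x ∈ [[a, b]], HasDerivAt (fun x => 2 * x - a - b) 2 x := fun x _ => by
    simpa using (((hasDerivAt_id x).const_mul 2).sub_const a).sub_const b
  have hcont : ContinuousOn h' [[a, b]] := fun x hx => (hh' x hx).continuousAt.continuousWithinAt
  have ibp₁ := intervalIntegral.integral_mul_deriv_eq_deriv_mul hkernel hh'
    ((by fun_prop : Continuous fun x : ℝ => 2 * x - a - b).intervalIntegrable _ _) hint
  have ibp₂ := intervalIntegral.integral_mul_deriv_eq_deriv_mul hkernel' hh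
    intervalIntegrable_const hcont.intervalIntegrable
  rw [intervalIntegral.integral_const_mul] at ibp₂
  rw [trapezoidal_error, trapezoidal_integral_one]
  simp_rw [mul_comm (h'' _)]
  rw [ibp₁, ibp₂]
  ring

section ReducedLagrangian

variable {E : Type*} [NormedAddCommGroup E] [NormedSpace ℝ E] (i j : E → ℝ) (q p e e' : E)

/-- The `n`-th derivative of `s ↦ i (q + s • e) + Dj (q + s • e) (p + s • e')`. -/
noncomputable def lagrangianLineDeriv : ℕ → ℝ → ℝ
  | 0 => fun s => iteratedFDeriv ℝ 0 i (q + s • e) (fun _ => e)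
      + iteratedFDeriv ℝ 1 j (q + s • e) (Fin.snoc (fun _ => e) (p + s • e'))
  | n + 1 => fun s => iteratedFDeriv ℝ (n + 1) i (q + s • e) (fun _ => e)
      + iteratedFDeriv ℝ (n + 2) j (q + s • e) (Fin.snoc (fun _ => e) (p + s • e'))
      + (n + 1) * iteratedFDeriv ℝ (n + 1) j (q + s • e) (Fin.snoc (fun _ => e) e')

variable {i j} in
theorem hasDerivAt_lagrangianLineDeriv {n : ℕ} (hi : ContDiff ℝ (n + 1) i)
    (hj : ContDiff ℝ (n + 2) j) (s : ℝ) :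
    HasDerivAt (lagrangianLineDeriv i j q p e e' n)
      (lagrangianLineDeriv i j q p e e' (n + 1) s) s := by
  have hdi := hasDerivAt_iteratedFDeriv_line hi q e (fun _ => e) s
  have hdj := hasDerivAt_iteratedFDeriv_line_snoc hj q e p e' (fun _ => e) s
  cases n with
  | zero =>
    refine (hdi.add hdj).congr_deriv ?_
    simp only [lagrangianLineDeriv, Fin.cons_self_const, Nat.cast_zero]
    ring
  | succ n =>
    have hdj' := hasDerivAt_iteratedFDeriv_line (hj.of_le (by norm_cast; omega)) q e
      (Fin.snoc (fun _ : Fin n => e) e') s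
    refine ((hdi.add hdj).add (hdj'.const_mul ((n : ℝ) + 1))).congr_deriv ?_
    simp only [lagrangianLineDeriv, Fin.cons_self_const, Fin.cons_snoc_eq_snoc_cons]
    push_cast
    ring

variable {i j} in
theorem lagrangian_sub_eq_trapezoid_add_integral (hi : ContDiff ℝ 3 i) (hj : ContDiff ℝ 4 j) :
    i (q + e) + fderiv ℝ j (q + e) (p + e') - (i q + fderiv ℝ j q p)
      = 1 / 2 * (fderiv ℝ i q e + iteratedFDeriv ℝ 2 j q ![e, p] + fderiv ℝ j q e'
          + (fderiv ℝ i (q + e) e + iteratedFDeriv ℝ 2 j (q + e) ![e, p + e']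
            + fderiv ℝ j (q + e) e'))
        + 1 / 2 * ∫ s in (0 : ℝ)..1,
          ((iteratedFDeriv ℝ 3 i (q + s • e) fun _ => e)
            + iteratedFDeriv ℝ 4 j (q + s • e) ![e, e, e, p + s • e']
            + 3 * iteratedFDeriv ℝ 3 j (q + s • e) ![e, e, e']) * (s * (s - 1)) := by
  have hderiv : ∀ n ≤ 2, ∀ s, HasDerivAt (lagrangianLineDeriv i j q p e e' n)
      (lagrangianLineDeriv i j q p e e' (n + 1) s) s := fun n hn s =>
    hasDerivAt_lagrangianLineDeriv q p e e' (hi.of_le (by norm_cast; omega))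
      (hj.of_le (by norm_cast; omega)) s
  have hcont₁ : Continuous (lagrangianLineDeriv i j q p e e' 1) :=
    continuous_iff_continuousAt.2 fun s => (hderiv 1 (by norm_num) s).continuousAt
  have hcont₃ : Continuous (lagrangianLineDeriv i j q p e e' 3) := by
    have hi₃ := hi.continuous_iteratedFDeriv le_rfl
    have hj₄ := hj.continuous_iteratedFDeriv le_rfl
    have hj₃ := hj.continuous_iteratedFDeriv (m := 3) (by norm_num)
    simp only [lagrangianLineDeriv]
    fun_prop
  have hftc := intervalIntegral.integral_eq_sub_of_hasDerivAt (fun s _ => hderiv 0 (by norm_num) s)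
    (hcont₁.intervalIntegrable 0 1)
  have htrap := trapezoidal_error_one_eq_integral (fun s _ => hderiv 1 (by norm_num) s)
    (fun s _ => hderiv 2 (by norm_num) s) (hcont₃.intervalIntegrable 0 1)
  rw [trapezoidal_error, trapezoidal_integral_one, hftc] at htrap
  -- `dsimp`, not `simp`: indices such as `2 + 2` also occur in the types of the tuples.
  dsimp only [lagrangianLineDeriv, Nat.reduceAdd] at htrap
  simp only [Fin.snoc_const_zero, Fin.snoc_const_succ, iteratedFDeriv_zero_apply,
    iteratedFDeriv_one_apply, zero_smul, one_smul, add_zero, sub_zero, Matrix.cons_val_zero,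
    Nat.cast_zero, zero_add, one_mul, show ((2 : ℕ) : ℝ) + 1 = 3 by norm_num] at htrap
  linarith

end ReducedLagrangian

/-- Error representation for the reduced system (Theorem 1 of the paper).
If `Dj(q̄) = 0` and `p̄` solves the reduced adjoint problem
`D²j(q̄)(δq, p̄) = −Di(q̄)(δq)` for all `δq`, then for arbitrary `q̃, p̃`,
with `e := q̄ − q̃` and `e* := p̄ − p̃`,
`i(q̄) − i(q̃) = (1/2) Dj(q̃)(e*) + (1/2)[Di(q̃)(e) + D²j(q̃)(e, p̃)] + Dj(q̃)(p̃) + R⁽³⁾`,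
where `R⁽³⁾ = (1/2)∫₀¹ [D³i(q̃+se)(e,e,e) + D⁴j(q̃+se)(e,e,e,p̃+se*) + 3 D³j(q̃+se)(e,e,e*)] s(s−1) ds`. -/
theorem error_representation_reduced_system
    (Q : Type*) [NormedAddCommGroup Q] [NormedSpace ℝ Q]
    (j : Q → ℝ) (hj : ContDiff ℝ 4 j)
    (i : Q → ℝ) (hi : ContDiff ℝ 3 i)
    (qbar pbar : Q)
    (hopt : fderiv ℝ j qbar = 0)
    (hadj : ∀ δq : Q, iteratedFDeriv ℝ 2 j qbar ![δq, pbar] = -(fderiv ℝ i qbar δq))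
    (qt pt : Q) :
    i qbar - i qt
      = (1 / 2) * fderiv ℝ j qt (pbar - pt)
        + (1 / 2) * (fderiv ℝ i qt (qbar - qt)
            + iteratedFDeriv ℝ 2 j qt ![qbar - qt, pt])
        + fderiv ℝ j qt pt
        + (1 / 2) * ∫ s in (0:ℝ)..1,
            ((iteratedFDeriv ℝ 3 i (qt + s • (qbar - qt)) fun _ => qbar - qt)
              + iteratedFDeriv ℝ 4 j (qt + s • (qbar - qt))
                  ![qbar - qt, qbar - qt, qbar - qt, pt + s • (pbar - pt)]
              + 3 * iteratedFDeriv ℝ 3 j (qt + s • (qbar - qt))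
                  ![qbar - qt, qbar - qt, pbar - pt])
            * (s * (s - 1)) := by
  have hrepr := lagrangian_sub_eq_trapezoid_add_integral qt pt (qbar - qt) (pbar - pt) hi hj
  simp only [add_sub_cancel, hopt, zero_apply] at hrepr
  linarith [hadj (qbar - qt)]
end

section
/- Let Q be a real normed vector space, i : Q → ℝ continuously Fréchet differentiable and j : Q → ℝ twice continuously Fréchet differentiable. Define m : Q × Q → ℝ by m(q, p) := i(q) + Dj(q)(p). Suppose q̄ ∈ Q satisfies Dj(q̄) = 0 and p̄ ∈ Q satisfies D²j(q̄)(δq, p̄) = −Di(q̄)(δq) for all δq ∈ Q. Then the Fréchet derivative of m at (q̄, p̄) vanishes: Dm(q̄, p̄)(δq, δp) = 0 for all δq, δp ∈ Q. -/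
open ContinuousLinearMap

section

variable {𝕜 E F : Type*} [NontriviallyNormedField 𝕜] [NormedAddCommGroup E] [NormedSpace 𝕜 E]
  [NormedAddCommGroup F] [NormedSpace 𝕜 F]

theorem hasFDerivAt_add_fderiv_apply {f g : E → F} {q p : E}
    (hf : DifferentiableAt 𝕜 f q) (hg : DifferentiableAt 𝕜 (fderiv 𝕜 g) q) :
    HasFDerivAt (fun x : E × E => f x.1 + fderiv 𝕜 g x.1 x.2)
      ((fderiv 𝕜 f q).comp (fst 𝕜 E E) +
        ((fderiv 𝕜 g q).comp (snd 𝕜 E E) + ((fderiv 𝕜 (fderiv 𝕜 g) q).comp (fst 𝕜 E E)).flip p))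
      (q, p) := by
  have hsnd : HasFDerivAt (fun x : E × E => x.2) (snd 𝕜 E E) (q, p) := hasFDerivAt_snd
  exact (hf.hasFDerivAt.comp (q, p) hasFDerivAt_fst).add
    ((hg.hasFDerivAt.comp (q, p) hasFDerivAt_fst).clm_apply hsnd)

theorem fderiv_add_fderiv_apply_apply {f g : E → F} {q p : E}
    (hf : DifferentiableAt 𝕜 f q) (hg : DifferentiableAt 𝕜 (fderiv 𝕜 g) q) (δq δp : E) :
    fderiv 𝕜 (fun x : E × E => f x.1 + fderiv 𝕜 g x.1 x.2) (q, p) (δq, δp) =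
      fderiv 𝕜 f q δq + (fderiv 𝕜 g q δp + fderiv 𝕜 (fderiv 𝕜 g) q δq p) := by
  rw [(hasFDerivAt_add_fderiv_apply hf hg).fderiv]
  rfl

end

/-- If `Dj(q̄) = 0` and `p̄` solves the reduced adjoint problem
`D²j(q̄)(δq, p̄) = −Di(q̄)(δq)` for all `δq`, then the Fréchet derivative of the
auxiliary functional `m(q,p) = i(q) + Dj(q)(p)` vanishes at `(q̄, p̄)`. -/
theorem auxiliary_functional_critical_point
    (Q : Type*) [NormedAddCommGroup Q] [NormedSpace ℝ Q]
    (i : Q → ℝ) (hi : ContDiff ℝ 1 i)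
    (j : Q → ℝ) (hj : ContDiff ℝ 2 j)
    (m : Q × Q → ℝ) (hm : ∀ q p : Q, m (q, p) = i q + fderiv ℝ j q p)
    (qbar pbar : Q)
    (hopt : fderiv ℝ j qbar = 0)
    (hadj : ∀ δq : Q, iteratedFDeriv ℝ 2 j qbar ![δq, pbar] = -(fderiv ℝ i qbar δq)) :
    ∀ δq δp : Q, fderiv ℝ m (qbar, pbar) (δq, δp) = 0 := by
  intro δq δp
  have hm' : m = fun x : Q × Q => i x.1 + fderiv ℝ j x.1 x.2 := funext fun x => hm x.1 x.2
  have hsecond : fderiv ℝ (fderiv ℝ j) qbar δq pbar = -fderiv ℝ i qbar δq := by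
    simpa [iteratedFDeriv_two_apply] using hadj δq
  rw [hm', fderiv_add_fderiv_apply_apply (hi.differentiable one_ne_zero qbar)
    ((hj.fderiv_right le_rfl).differentiable one_ne_zero qbar), hopt, hsecond]
  simp
end

section
/- (Abstract form of the Localizable Error Representation) Let W be a real normed vector space, L : W → ℝ four times continuously Fréchet differentiable, and I : W → ℝ three times continuously Fréchet differentiable. Suppose ξ̄ ∈ W satisfies DL(ξ̄) = 0, and ξ̄* ∈ W solves the adjoint problem D²L(ξ̄)(δξ, ξ̄*) = −DI(ξ̄)(δξ) for all δξ ∈ W. Then for arbitrary fixed ξ̃, ξ̃* ∈ W, setting ē := ξ̄ − ξ̃ and ē* := ξ̄* − ξ̃*, one has: I(ξ̄) − I(ξ̃) = (1/2)·[ DL(ξ̃)(ē*) + DI(ξ̃)(ē) + D²L(ξ̃)(ē, ξ̃*) ] + DL(ξ̃)(ξ̃*) + R̃⁽³⁾, where R̃⁽³⁾ = (1/2) ∫₀¹ [ D³I(ξ̃ + s·ē)(ē, ē, ē) + D⁴L(ξ̃ + s·ē)(ē, ē, ē, ξ̃* + s·ē*) + 3·D³L(ξ̃ + s·ē)(ē,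 ē, ē*) ] · s(s−1) ds. -/
/-!
Put `e = ξ̄ - ξ̃`, `e* = ξ̄* - ξ̃*` and `g(s) = I(ξ̃ + s e) + DL(ξ̃ + s e)(ξ̃* + s e*)`.
Stationarity of `L` at `ξ̄` gives `g(1) = I(ξ̄)` and, together with the adjoint equation,
`g'(1) = 0`, while `g(0) = I(ξ̃) + DL(ξ̃)(ξ̃*)`. The trapezoidal rule with its remainder in
integral form, `g(1) - g(0) = (g'(0) + g'(1)) / 2 + ½ ∫₀¹ g'''(s) s (s - 1) ds`, is then the
representation: `g'''` is exactly the integrand of `R̃⁽³⁾`.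
-/

section IteratedFDerivAlongLine

variable {𝕜 E F : Type*} [NontriviallyNormedField 𝕜] [NormedAddCommGroup E] [NormedSpace 𝕜 E]
  [NormedAddCommGroup F] [NormedSpace 𝕜 F] {f : E → F} {N : WithTop ℕ∞} {n : ℕ}

theorem hasDerivAt_iteratedFDeriv_add_smul (hf : ContDiff 𝕜 N f) (hn : (n : WithTop ℕ∞) < N)
    (x v : E) (m : Fin n → E) (t : 𝕜) :
    HasDerivAt (fun t => iteratedFDeriv 𝕜 n f (x + t • v) m)
      (iteratedFDeriv 𝕜 (n + 1) f (x + t • v) (Matrix.vecCons v m)) t := by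
  have hline : HasDerivAt (fun t : 𝕜 => x + t • v) v t := by
    simpa using ((hasDerivAt_id t).smul_const v).const_add x
  have hD := (hf.differentiable_iteratedFDeriv hn (x + t • v)).hasFDerivAt
  rw [iteratedFDeriv_succ_apply_left]
  simpa [Function.comp_def] using
    (ContinuousMultilinearMap.apply 𝕜 (fun _ : Fin n => E) F m).hasFDerivAt.comp_hasDerivAt t
      (hD.comp_hasDerivAt t hline)

theorem hasDerivAt_iteratedFDeriv_add_smul_snoc (hf : ContDiff 𝕜 N f)
    (hn : ((n + 1 : ℕ) : WithTop ℕ∞) < N) (x v z u : E) (m : Fin n → E) (t : 𝕜) :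
    HasDerivAt (fun t => iteratedFDeriv 𝕜 (n + 1) f (x + t • v) (Fin.snoc m (z + t • u)))
      (iteratedFDeriv 𝕜 (n + 2) f (x + t • v) (Fin.snoc (Matrix.vecCons v m) (z + t • u))
        + iteratedFDeriv 𝕜 (n + 1) f (x + t • v) (Fin.snoc m u)) t := by
  have hsplit : ∀ k (T : E [×k + 1]→L[𝕜] F) (p : Fin k → E) (s : 𝕜),
      T (Fin.snoc p (z + s • u)) = T (Fin.snoc p z) + s • T (Fin.snoc p u) := fun k T p s => by
    have h := T.toMultilinearMap.snoc_add p z (s • u)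
    rw [T.toMultilinearMap.snoc_smul] at h
    exact h
  simp only [hsplit]
  have hz := hasDerivAt_iteratedFDeriv_add_smul hf hn x v (Fin.snoc m z) t
  have hu := hasDerivAt_iteratedFDeriv_add_smul hf hn x v (Fin.snoc m u) t
  rw [← Matrix.Fin.snoc_vecCons] at hz hu
  exact (hz.add ((hasDerivAt_id t).smul hu)).congr_deriv (by simp only [id_eq, one_smul]; abel)

end IteratedFDerivAlongLine

theorem sub_eq_trapezoid_add_integral {g g' g'' g''' : ℝ → ℝ} {a b : ℝ}
    (hg : ∀ s ∈ Set.uIcc a b, HasDerivAt g (g' s) s)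
    (hg' : ∀ s ∈ Set.uIcc a b, HasDerivAt g' (g'' s) s)
    (hg'' : ∀ s ∈ Set.uIcc a b, HasDerivAt g'' (g''' s) s)
    (hint : IntervalIntegrable g''' MeasureTheory.volume a b) :
    g b - g a = (b - a) / 2 * (g' a + g' b)
      + 1 / 2 * ∫ s in a..b, g''' s * ((s - a) * (s - b)) := by
  have hΦ : ∀ s ∈ Set.uIcc a b, HasDerivAt
      (fun s => g'' s * ((s - a) * (s - b)) - g' s * (2 * s - a - b) + 2 * g s)
      (g''' s * ((s - a) * (s - b))) s := by
    -- the `g''` and `g'` contributions to the derivative cancel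
    intro s hs
    have hq : HasDerivAt (fun s : ℝ => (s - a) * (s - b)) (2 * s - a - b) s :=
      (((hasDerivAt_id s).sub_const a).mul ((hasDerivAt_id s).sub_const b)).congr_deriv
        (by simp only [id_eq]; ring)
    have hl : HasDerivAt (fun s : ℝ => 2 * s - a - b) 2 s := by
      simpa using (((hasDerivAt_id s).const_mul 2).sub_const a).sub_const b
    exact ((((hg'' s hs).mul hq).sub ((hg' s hs).mul hl)).add
      ((hg s hs).const_mul 2)).congr_deriv (by ring)
  rw [intervalIntegral.integral_eq_sub_of_hasDerivAt hΦ (hint.mul_continuousOn (by fun_prop))]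
  ring

section LagrangianAlongSegment

variable {W : Type*} [NormedAddCommGroup W] [NormedSpace ℝ W] {L I : W → ℝ} (x e z u : W)

theorem hasDerivAt_lagrangian_line (hL : ContDiff ℝ 2 L) (hI : ContDiff ℝ 1 I) (s : ℝ) :
    HasDerivAt (fun s => I (x + s • e) + fderiv ℝ L (x + s • e) (z + s • u))
      (fderiv ℝ I (x + s • e) e + iteratedFDeriv ℝ 2 L (x + s • e) ![e, z + s • u]
        + fderiv ℝ L (x + s • e) u) s := by
  have hI' : HasDerivAt (fun t => I (x + t • e)) (iteratedFDeriv ℝ 1 I (x + s • e) ![e]) s := by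
    simpa only [iteratedFDeriv_zero_apply]
      using hasDerivAt_iteratedFDeriv_add_smul hI (n := 0) (by norm_num) x e ![] s
  have hL' : HasDerivAt (fun t => iteratedFDeriv ℝ 1 L (x + t • e) ![z + t • u])
      (iteratedFDeriv ℝ 2 L (x + s • e) ![e, z + s • u]
        + iteratedFDeriv ℝ 1 L (x + s • e) ![u]) s := by
    simpa only [Matrix.Fin.snoc_vecEmpty, Matrix.Fin.snoc_vecCons]
      using hasDerivAt_iteratedFDeriv_add_smul_snoc hL (n := 0) (by norm_num) x e z u ![] s
  simp only [iteratedFDeriv_one_apply, Matrix.cons_val_zero] at hI' hL'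
  exact (hI'.add hL').congr_deriv (by ring)

theorem hasDerivAt_lagrangian_line_deriv (hL : ContDiff ℝ 3 L) (hI : ContDiff ℝ 2 I) (s : ℝ) :
    HasDerivAt (fun s => fderiv ℝ I (x + s • e) e
        + iteratedFDeriv ℝ 2 L (x + s • e) ![e, z + s • u]
        + fderiv ℝ L (x + s • e) u)
      (iteratedFDeriv ℝ 2 I (x + s • e) ![e, e]
        + iteratedFDeriv ℝ 3 L (x + s • e) ![e, e, z + s • u]
        + 2 * iteratedFDeriv ℝ 2 L (x + s • e) ![e, u]) s := by
  have hI' : HasDerivAt (fun t => iteratedFDeriv ℝ 1 I (x + t • e) ![e])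
      (iteratedFDeriv ℝ 2 I (x + s • e) ![e, e]) s :=
    hasDerivAt_iteratedFDeriv_add_smul hI (by norm_num) x e ![e] s
  have hL₂ : HasDerivAt (fun t => iteratedFDeriv ℝ 2 L (x + t • e) ![e, z + t • u])
      (iteratedFDeriv ℝ 3 L (x + s • e) ![e, e, z + s • u]
        + iteratedFDeriv ℝ 2 L (x + s • e) ![e, u]) s := by
    simpa only [Matrix.Fin.snoc_vecEmpty, Matrix.Fin.snoc_vecCons]
      using hasDerivAt_iteratedFDeriv_add_smul_snoc hL (n := 1) (by norm_num) x e z u ![e] s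
  have hL₁ : HasDerivAt (fun t => iteratedFDeriv ℝ 1 L (x + t • e) ![u])
      (iteratedFDeriv ℝ 2 L (x + s • e) ![e, u]) s :=
    hasDerivAt_iteratedFDeriv_add_smul hL (by norm_num) x e ![u] s
  simp only [iteratedFDeriv_one_apply, Matrix.cons_val_zero] at hI' hL₁
  exact ((hI'.add hL₂).add hL₁).congr_deriv (by ring)

theorem hasDerivAt_lagrangian_line_deriv2 (hL : ContDiff ℝ 4 L) (hI : ContDiff ℝ 3 I) (s : ℝ) :
    HasDerivAt (fun s => iteratedFDeriv ℝ 2 I (x + s • e) ![e, e]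
        + iteratedFDeriv ℝ 3 L (x + s • e) ![e, e, z + s • u]
        + 2 * iteratedFDeriv ℝ 2 L (x + s • e) ![e, u])
      ((iteratedFDeriv ℝ 3 I (x + s • e) fun _ => e)
        + iteratedFDeriv ℝ 4 L (x + s • e) ![e, e, e, z + s • u]
        + 3 * iteratedFDeriv ℝ 3 L (x + s • e) ![e, e, u]) s := by
  have hconst : (![e, e, e] : Fin 3 → W) = fun _ => e := by ext i; fin_cases i <;> rfl
  have hI' : HasDerivAt (fun t => iteratedFDeriv ℝ 2 I (x + t • e) ![e, e])
      (iteratedFDeriv ℝ 3 I (x + s • e) fun _ => e) s :=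
    hconst ▸ hasDerivAt_iteratedFDeriv_add_smul hI (by norm_num) x e ![e, e] s
  have hL₃ : HasDerivAt (fun t => iteratedFDeriv ℝ 3 L (x + t • e) ![e, e, z + t • u])
      (iteratedFDeriv ℝ 4 L (x + s • e) ![e, e, e, z + s • u]
        + iteratedFDeriv ℝ 3 L (x + s • e) ![e, e, u]) s := by
    simpa only [Matrix.Fin.snoc_vecEmpty, Matrix.Fin.snoc_vecCons]
      using hasDerivAt_iteratedFDeriv_add_smul_snoc hL (n := 2) (by norm_num) x e z u ![e, e] s
  have hL₂ : HasDerivAt (fun t => iteratedFDeriv ℝ 2 L (x + t • e) ![e, u])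
      (iteratedFDeriv ℝ 3 L (x + s • e) ![e, e, u]) s :=
    hasDerivAt_iteratedFDeriv_add_smul hL (by norm_num) x e ![e, u] s
  exact ((hI'.add hL₃).add (hL₂.const_mul 2)).congr_deriv (by ring)

end LagrangianAlongSegment

/-- Abstract form of the localizable error representation (Theorem 2 of the paper).
If `DL(ξ̄) = 0` and `ξ̄*` solves the adjoint problem
`D²L(ξ̄)(δξ, ξ̄*) = −DI(ξ̄)(δξ)` for all `δξ`, then for arbitrary `ξ̃, ξ̃*`,
with `ē := ξ̄ − ξ̃` and `ē* := ξ̄* − ξ̃*`,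
`I(ξ̄) − I(ξ̃) = (1/2)[DL(ξ̃)(ē*) + DI(ξ̃)(ē) + D²L(ξ̃)(ē, ξ̃*)] + DL(ξ̃)(ξ̃*) + R̃⁽³⁾`,
where `R̃⁽³⁾ = (1/2)∫₀¹ [D³I(ξ̃+sē)(ē,ē,ē) + D⁴L(ξ̃+sē)(ē,ē,ē,ξ̃*+sē*) + 3 D³L(ξ̃+sē)(ē,ē,ē*)] s(s−1) ds`. -/
theorem localizable_error_representation
    (W : Type*) [NormedAddCommGroup W] [NormedSpace ℝ W]
    (L : W → ℝ) (hL : ContDiff ℝ 4 L)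
    (I : W → ℝ) (hI : ContDiff ℝ 3 I)
    (ξbar ξstar : W)
    (hopt : fderiv ℝ L ξbar = 0)
    (hadj : ∀ δξ : W, iteratedFDeriv ℝ 2 L ξbar ![δξ, ξstar] = -(fderiv ℝ I ξbar δξ))
    (ξt ξtstar : W) :
    I ξbar - I ξt
      = (1 / 2) * (fderiv ℝ L ξt (ξstar - ξtstar)
            + fderiv ℝ I ξt (ξbar - ξt)
            + iteratedFDeriv ℝ 2 L ξt ![ξbar - ξt, ξtstar])
        + fderiv ℝ L ξt ξtstar
        + (1 / 2) * ∫ s in (0:ℝ)..1,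
            ((iteratedFDeriv ℝ 3 I (ξt + s • (ξbar - ξt)) fun _ => ξbar - ξt)
              + iteratedFDeriv ℝ 4 L (ξt + s • (ξbar - ξt))
                  ![ξbar - ξt, ξbar - ξt, ξbar - ξt, ξtstar + s • (ξstar - ξtstar)]
              + 3 * iteratedFDeriv ℝ 3 L (ξt + s • (ξbar - ξt))
                  ![ξbar - ξt, ξbar - ξt, ξstar - ξtstar])
            * (s * (s - 1)) := by
  set e := ξbar - ξt
  set u := ξstar - ξtstar
  have hcontL₃ := hL.continuous_iteratedFDeriv (m := 3) (by norm_num)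
  have hcontL₄ := hL.continuous_iteratedFDeriv (m := 4) le_rfl
  have hcontI₃ := hI.continuous_iteratedFDeriv (m := 3) le_rfl
  have htrapezoid := sub_eq_trapezoid_add_integral (a := 0) (b := 1)
    (fun s _ => hasDerivAt_lagrangian_line ξt e ξtstar u (hL.of_le (by norm_num))
      (hI.of_le (by norm_num)) s)
    (fun s _ => hasDerivAt_lagrangian_line_deriv ξt e ξtstar u (hL.of_le (by norm_num))
      (hI.of_le (by norm_num)) s)
    (fun s _ => hasDerivAt_lagrangian_line_deriv2 ξt e ξtstar u hL hI s)
    (Continuous.intervalIntegrable (by fun_prop) 0 1)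
  have hx₁ : ξt + (1 : ℝ) • e = ξbar := by simp [e]
  have hz₁ : ξtstar + (1 : ℝ) • u = ξstar := by simp [u]
  simp only [hx₁, hz₁, hopt, hadj, zero_smul, add_zero, sub_zero, zero_apply,
    add_neg_cancel] at htrapezoid
  linarith
end

section
/- (Lemma on the adjoint optimality system) Let U, Q, V be real normed vector spaces. Let A : U × Q → V* (where V* is the space of continuous linear functionals on V) be twice continuously Fréchet differentiable, J : U × Q → ℝ twice continuously Fréchet differentiable, I : U × Q → ℝ continuously Fréchet differentiable, and S : Q → U twice continuously Fréchet differentiable with A(S(q), q) = 0 for all q ∈ Q. Define the Lagrangian L(u, q, z) := J(u, q) − A(u, q)(z), the reduced functionals j(q) := J(S(q), q) and i(q) := I(S(q), q). Let q̄ ∈ Q, ū := S(q̄), and let z̄ ∈ V satisfy the adjoint state equation: D_uJ(ū, q̄)(δu) − D_uA(ū, q̄)(δu)(z̄) = 0 for all δu ∈ U. Let p̄ ∈ Q solve the reduced adjoint problem D²j(q̄)(δq, p̄) = −Di(q̄)(δq) for all δq ∈ Q, set v̄ := DS(q̄)(p̄), and suppose ȳ ∈ V satisfies the first row of the adjoint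 optimality system: for all δu ∈ U, D²L(ū,q̄,z̄)((δu,0,0),(v̄,p̄,ȳ)) = −D_uI(ū,q̄)(δu). Then the remaining two rows hold as well: for all δq ∈ Q, D²L(ū,q̄,z̄)((0,δq,0),(v̄,p̄,ȳ)) = −D_qI(ū,q̄)(δq), and for all δz ∈ V, D²L(ū,q̄,z̄)((0,0,δz),(v̄,p̄,ȳ)) = 0; that is, (v̄, p̄, ȳ) solves the full adjoint optimality system D²L(ū,q̄,z̄)(δξ, (v̄,p̄,ȳ)) = −DI(ū,q̄)(δu,δq) for all δξ = (δu,δq,δz). -/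
/-!
Differentiating the state equation `A (S q, q) = 0` once and twice along the graph of `S`, and
using the adjoint equation for `z̄`, identifies the reduced Hessian `D²j(q̄)(δq, p̄)` with the
Lagrangian Hessian `D²L(ū,q̄,z̄)((S'δq, δq, 0), (v̄, p̄, ȳ))`, and reduces the `δz`-row to
`-DA(ū,q̄)(v̄, p̄)(δz) = 0`. Hence the linear functional `δξ ↦ D²L(δξ, (v̄,p̄,ȳ)) + DI(δu, δq)`
vanishes on `U × 0 × 0` (the first row), on the directions `(S'δq, δq, 0)` (the reduced adjoint
equation, since `Di(q̄) δq = DI(ū,q̄)(S'δq, δq)`) and on `0 × 0 × V`, so it vanishes identically.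
-/

open ContinuousLinearMap

section

variable {𝕜 : Type*} [NontriviallyNormedField 𝕜]
  {U Q V W E G : Type*} [NormedAddCommGroup U] [NormedSpace 𝕜 U]
  [NormedAddCommGroup Q] [NormedSpace 𝕜 Q] [NormedAddCommGroup V] [NormedSpace 𝕜 V]
  [NormedAddCommGroup W] [NormedSpace 𝕜 W] [NormedAddCommGroup E] [NormedSpace 𝕜 E]
  [NormedAddCommGroup G] [NormedSpace 𝕜 G]

theorem fderiv_fderiv_apply {f : E → G} {x : E}
    (hf : DifferentiableAt 𝕜 (fderiv 𝕜 f) x) (a b : E) :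
    fderiv 𝕜 (fderiv 𝕜 f) x a b = fderiv 𝕜 (fun y => fderiv 𝕜 f y b) x a := by
  rw [fderiv_clm_apply hf (differentiableAt_const b)]
  simp

theorem HasFDerivAt.graph {S : Q → U} {S' : Q →L[𝕜] U} {q : Q} (hS : HasFDerivAt S S' q) :
    HasFDerivAt (fun q => (S q, q)) (S'.prod (.id 𝕜 Q)) q :=
  hS.prodMk (hasFDerivAt_id q)

theorem fderiv_comp_graph_apply {F : U × Q → G} {S : Q → U} {q : Q}
    (hF : DifferentiableAt 𝕜 F (S q, q)) (hS : DifferentiableAt 𝕜 S q) (a : Q) :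
    fderiv 𝕜 (fun q => F (S q, q)) q a = fderiv 𝕜 F (S q, q) (fderiv 𝕜 S q a, a) := by
  rw [HasFDerivAt.fderiv (f := fun q => F (S q, q))
    (hF.hasFDerivAt.comp (f := fun q => (S q, q)) q hS.hasFDerivAt.graph)]
  simp

theorem fderiv_fderiv_comp_graph_apply {F : U × Q → G} {S : Q → U}
    (hF : ContDiff 𝕜 2 F) (hS : ContDiff 𝕜 2 S) (q a b : Q) :
    fderiv 𝕜 (fderiv 𝕜 fun q => F (S q, q)) q a b =
      fderiv 𝕜 (fderiv 𝕜 F) (S q, q) (fderiv 𝕜 S q a, a) (fderiv 𝕜 S q b, b)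
        + fderiv 𝕜 F (S q, q) (fderiv 𝕜 (fderiv 𝕜 S) q a b, 0) := by
  have hF1 : Differentiable 𝕜 F := hF.differentiable two_ne_zero
  have hS1 : Differentiable 𝕜 S := hS.differentiable two_ne_zero
  have hF2 : Differentiable 𝕜 (fderiv 𝕜 F) := (hF.fderiv_right le_rfl).differentiable one_ne_zero
  have hS2 : Differentiable 𝕜 (fderiv 𝕜 S) := (hS.fderiv_right le_rfl).differentiable one_ne_zero
  have hFS : ContDiff 𝕜 2 fun q => F (S q, q) := hF.comp (hS.prodMk contDiff_id)
  have second : HasFDerivAt (fun y => fderiv 𝕜 F (S y, y) (fderiv 𝕜 S y b, b)) _ q :=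
    ((hF2 _).hasFDerivAt.comp q (hS1 q).hasFDerivAt.graph).clm_apply
      (((hS2 q).hasFDerivAt.clm_apply (hasFDerivAt_const b q)).prodMk (hasFDerivAt_const b q))
  rw [fderiv_fderiv_apply ((hFS.fderiv_right le_rfl).differentiable one_ne_zero q)]
  simp only [fderiv_comp_graph_apply (hF1 _) (hS1 _)]
  rw [second.fderiv]
  simp only [Function.comp_apply, comp_zero, zero_add, add_apply, comp_apply,
    ContinuousLinearMap.prod_apply, flip_apply, zero_apply, id_apply]
  exact add_comm _ _

theorem fderiv_fderiv_sub_clm_apply {J : E → 𝕜} {A : E → V →L[𝕜] 𝕜}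
    (hJ : ContDiff 𝕜 2 J) (hA : ContDiff 𝕜 2 A) (P : W →L[𝕜] E) (Z : W →L[𝕜] V) (x a b : W) :
    fderiv 𝕜 (fderiv 𝕜 fun w => J (P w) - A (P w) (Z w)) x a b =
      fderiv 𝕜 (fderiv 𝕜 J) (P x) (P a) (P b) - fderiv 𝕜 (fderiv 𝕜 A) (P x) (P a) (P b) (Z x)
        - fderiv 𝕜 A (P x) (P a) (Z b) - fderiv 𝕜 A (P x) (P b) (Z a) := by
  have hJ1 : Differentiable 𝕜 J := hJ.differentiable two_ne_zero
  have hA1 : Differentiable 𝕜 A := hA.differentiable two_ne_zero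
  have hJ2 : Differentiable 𝕜 (fderiv 𝕜 J) := (hJ.fderiv_right le_rfl).differentiable one_ne_zero
  have hA2 : Differentiable 𝕜 (fderiv 𝕜 A) := (hA.fderiv_right le_rfl).differentiable one_ne_zero
  have hL : ContDiff 𝕜 2 fun w => J (P w) - A (P w) (Z w) := by fun_prop
  have first : fderiv 𝕜 (fun w => J (P w) - A (P w) (Z w)) = fun y =>
      (fderiv 𝕜 J (P y)).comp P - ((A (P y)).comp Z + ((fderiv 𝕜 A (P y)).comp P).flip (Z y)) :=
    funext fun y => (((hJ1 _).hasFDerivAt.comp y P.hasFDerivAt).sub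
      (((hA1 _).hasFDerivAt.comp y P.hasFDerivAt).clm_apply Z.hasFDerivAt)).fderiv
  have second : HasFDerivAt
      (fun y => fderiv 𝕜 J (P y) (P b) - (A (P y) (Z b) + fderiv 𝕜 A (P y) (P b) (Z y))) _ x :=
    (((hJ2 _).hasFDerivAt.comp x P.hasFDerivAt).clm_apply (hasFDerivAt_const _ x)).sub
      ((((hA1 _).hasFDerivAt.comp x P.hasFDerivAt).clm_apply (hasFDerivAt_const _ x)).add
        ((((hA2 _).hasFDerivAt.comp x P.hasFDerivAt).clm_apply (hasFDerivAt_const _ x)).clm_apply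
          Z.hasFDerivAt))
  rw [fderiv_fderiv_apply ((hL.fderiv_right le_rfl).differentiable one_ne_zero x), first]
  simp only [sub_apply, add_apply, comp_apply, flip_apply]
  rw [second.fderiv]
  simp only [Function.comp_apply, comp_zero, zero_add, sub_apply, flip_apply, comp_apply, add_apply]
  ring

def lagrangian (J : U × Q → 𝕜) (A : U × Q → V →L[𝕜] 𝕜) (w : U × Q × V) : 𝕜 :=
  J (w.1, w.2.1) - A (w.1, w.2.1) w.2.2

theorem fderiv_fderiv_lagrangian_apply {J : U × Q → 𝕜} {A : U × Q → V →L[𝕜] 𝕜}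
    (hJ : ContDiff 𝕜 2 J) (hA : ContDiff 𝕜 2 A) (u : U) (q : Q) (z : V)
    (a₁ b₁ : U) (a₂ b₂ : Q) (a₃ b₃ : V) :
    fderiv 𝕜 (fderiv 𝕜 (lagrangian J A)) (u, q, z) (a₁, a₂, a₃) (b₁, b₂, b₃) =
      fderiv 𝕜 (fderiv 𝕜 J) (u, q) (a₁, a₂) (b₁, b₂)
        - fderiv 𝕜 (fderiv 𝕜 A) (u, q) (a₁, a₂) (b₁, b₂) z
        - fderiv 𝕜 A (u, q) (a₁, a₂) b₃ - fderiv 𝕜 A (u, q) (b₁, b₂) a₃ :=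
  fderiv_fderiv_sub_clm_apply hJ hA ((fst 𝕜 U (Q × V)).prod ((fst 𝕜 Q V).comp (snd 𝕜 U (Q × V))))
    ((snd 𝕜 Q V).comp (snd 𝕜 U (Q × V))) _ _ _

theorem apply_eq_zero_of_vanishes_on_graph {U Q V G F : Type*} [AddCommGroup U] [AddCommGroup Q]
    [AddCommGroup V] [AddCommGroup G] [FunLike F (U × Q × V) G] [AddMonoidHomClass F (U × Q × V) G]
    (ℓ : F) (T : Q → U) (h₁ : ∀ u, ℓ (u, 0, 0) = 0) (h₂ : ∀ q, ℓ (T q, q, 0) = 0)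
    (h₃ : ∀ z, ℓ (0, 0, z) = 0) (w : U × Q × V) : ℓ w = 0 := by
  obtain ⟨u, q, z⟩ := w
  have hw : (u, q, z) = (u - T q, 0, 0) + (T q, q, 0) + (0, 0, z) := by simp
  rw [hw, map_add, map_add, h₁, h₂, h₃, add_zero, add_zero]

section AdjointSystem

variable {J : U × Q → 𝕜} {A : U × Q → V →L[𝕜] 𝕜} {S : Q → U}

theorem fderiv_apply_graph_tangent_eq_zero (hA : Differentiable 𝕜 A) (hS : Differentiable 𝕜 S)
    (hstate : ∀ q, A (S q, q) = 0) (q a : Q) : fderiv 𝕜 A (S q, q) (fderiv 𝕜 S q a, a) = 0 := by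
  rw [← fderiv_comp_graph_apply (hA _) (hS _), funext hstate]
  simp

theorem fderiv_fderiv_apply_graph_tangent_add_eq_zero (hA : ContDiff 𝕜 2 A) (hS : ContDiff 𝕜 2 S)
    (hstate : ∀ q, A (S q, q) = 0) (q a b : Q) :
    fderiv 𝕜 (fderiv 𝕜 A) (S q, q) (fderiv 𝕜 S q a, a) (fderiv 𝕜 S q b, b)
      + fderiv 𝕜 A (S q, q) (fderiv 𝕜 (fderiv 𝕜 S) q a b, 0) = 0 := by
  rw [← fderiv_fderiv_comp_graph_apply hA hS, funext hstate]
  simp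

theorem fderiv_fderiv_reduced_eq_lagrangian (hJ : ContDiff 𝕜 2 J) (hA : ContDiff 𝕜 2 A)
    (hS : ContDiff 𝕜 2 S) (hstate : ∀ q, A (S q, q) = 0) {q : Q} {z : V}
    (hz : ∀ δu, fderiv 𝕜 J (S q, q) (δu, 0) - fderiv 𝕜 A (S q, q) (δu, 0) z = 0) (a b : Q) (y : V) :
    fderiv 𝕜 (fderiv 𝕜 fun q => J (S q, q)) q a b =
      fderiv 𝕜 (fderiv 𝕜 (lagrangian J A)) (S q, q, z) (fderiv 𝕜 S q a, a, 0)
        (fderiv 𝕜 S q b, b, y) := by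
  have hstate₂ := congr($(fderiv_fderiv_apply_graph_tangent_add_eq_zero hA hS hstate q a b) z)
  rw [add_apply, zero_apply] at hstate₂
  rw [fderiv_fderiv_comp_graph_apply hJ hS, fderiv_fderiv_lagrangian_apply hJ hA,
    fderiv_apply_graph_tangent_eq_zero (hA.differentiable two_ne_zero)
      (hS.differentiable two_ne_zero) hstate, map_zero, zero_apply]
  linear_combination hz (fderiv 𝕜 (fderiv 𝕜 S) q a b) + hstate₂

theorem fderiv_fderiv_lagrangian_adjoint_dir_eq_zero (hJ : ContDiff 𝕜 2 J) (hA : ContDiff 𝕜 2 A)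
    (hS : Differentiable 𝕜 S) (hstate : ∀ q, A (S q, q) = 0) (q b : Q) (z δz y : V) :
    fderiv 𝕜 (fderiv 𝕜 (lagrangian J A)) (S q, q, z) (0, 0, δz) (fderiv 𝕜 S q b, b, y) = 0 := by
  rw [fderiv_fderiv_lagrangian_apply hJ hA,
    fderiv_apply_graph_tangent_eq_zero (hA.differentiable two_ne_zero) hS hstate, Prod.mk_zero_zero]
  simp

end AdjointSystem

end

/-- Lemma on the adjoint optimality system (Lemma 1 of the paper). With the
Lagrangian `L(u,q,z) = J(u,q) − A(u,q)(z)`, reduced functionals `j(q) = J(S(q),q)`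
and `i(q) = I(S(q),q)`, adjoint state `z̄`, reduced adjoint `p̄`, `v̄ := DS(q̄)(p̄)`,
and `ȳ` satisfying the first row of the adjoint optimality system, the triple
`(v̄, p̄, ȳ)` solves the full adjoint optimality system
`D²L(ū,q̄,z̄)(δξ, (v̄,p̄,ȳ)) = −DI(ū,q̄)(δu,δq)` for all `δξ = (δu,δq,δz)`. -/
theorem adjoint_optimality_system_lemma
    (U Q V : Type*) [NormedAddCommGroup U] [NormedSpace ℝ U]
    [NormedAddCommGroup Q] [NormedSpace ℝ Q]
    [NormedAddCommGroup V] [NormedSpace ℝ V]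
    (A : U × Q → V →L[ℝ] ℝ) (hA : ContDiff ℝ 2 A)
    (J : U × Q → ℝ) (hJ : ContDiff ℝ 2 J)
    (I : U × Q → ℝ) (hI : ContDiff ℝ 1 I)
    (S : Q → U) (hS : ContDiff ℝ 2 S)
    (hstate : ∀ q : Q, A (S q, q) = 0)
    (L : U × Q × V → ℝ) (hL : ∀ (u : U) (q : Q) (z : V), L (u, q, z) = J (u, q) - A (u, q) z)
    (j : Q → ℝ) (hj : ∀ q : Q, j q = J (S q, q))
    (i : Q → ℝ) (hi : ∀ q : Q, i q = I (S q, q))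
    (qbar : Q) (ubar : U) (hubar : ubar = S qbar)
    (zbar : V)
    (hzbar : ∀ δu : U,
      fderiv ℝ J (ubar, qbar) (δu, (0 : Q))
        - fderiv ℝ A (ubar, qbar) (δu, (0 : Q)) zbar = 0)
    (pbar : Q)
    (hpbar : ∀ δq : Q,
      iteratedFDeriv ℝ 2 j qbar ![δq, pbar] = -(fderiv ℝ i qbar δq))
    (vbar : U) (hvbar : vbar = fderiv ℝ S qbar pbar)
    (ybar : V)
    (hybar : ∀ δu : U,
      iteratedFDeriv ℝ 2 L (ubar, qbar, zbar)
          ![((δu, (0 : Q), (0 : V)) : U × Q × V), (vbar, pbar, ybar)]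
        = -(fderiv ℝ I (ubar, qbar) (δu, (0 : Q)))) :
    (∀ δq : Q,
        iteratedFDeriv ℝ 2 L (ubar, qbar, zbar)
            ![(((0 : U), δq, (0 : V)) : U × Q × V), (vbar, pbar, ybar)]
          = -(fderiv ℝ I (ubar, qbar) ((0 : U), δq))) ∧
      (∀ δz : V,
        iteratedFDeriv ℝ 2 L (ubar, qbar, zbar)
            ![(((0 : U), (0 : Q), δz) : U × Q × V), (vbar, pbar, ybar)]
          = 0) ∧
      (∀ (δu : U) (δq : Q) (δz : V),
        iteratedFDeriv ℝ 2 L (ubar, qbar, zbar)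
            ![((δu, δq, δz) : U × Q × V), (vbar, pbar, ybar)]
          = -(fderiv ℝ I (ubar, qbar) (δu, δq))) := by
  subst hubar hvbar
  obtain rfl : L = lagrangian J A := funext fun w => hL w.1 w.2.1 w.2.2
  obtain rfl : j = fun q => J (S q, q) := funext hj
  obtain rfl : i = fun q => I (S q, q) := funext hi
  simp only [iteratedFDeriv_two_apply, Matrix.cons_val_zero, Matrix.cons_val_one] at hpbar hybar ⊢
  have hS₁ : Differentiable ℝ S := hS.differentiable two_ne_zero
  have hadjoint_dir := fderiv_fderiv_lagrangian_adjoint_dir_eq_zero hJ hA hS₁ hstate qbar pbar zbar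
  let ℓ : U × Q × V →+ ℝ := AddMonoidHom.mk'
    (fun w => fderiv ℝ (fderiv ℝ (lagrangian J A)) (S qbar, qbar, zbar) w
        (fderiv ℝ S qbar pbar, pbar, ybar) + fderiv ℝ I (S qbar, qbar) (w.1, w.2.1))
    (fun w w' => by
      simp only [map_add, add_apply, Prod.fst_add, Prod.snd_add, ← Prod.mk_add_mk]
      ring)
  have hℓ : ∀ w, ℓ w = 0 := apply_eq_zero_of_vanishes_on_graph ℓ (fderiv ℝ S qbar)
    (fun δu => by simp [ℓ, hybar])
    (fun δq => by
      simp [ℓ, ← fderiv_fderiv_reduced_eq_lagrangian hJ hA hS hstate hzbar, hpbar,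
        fderiv_comp_graph_apply (hI.differentiable one_ne_zero _) (hS₁ _)])
    (fun δz => by simp [ℓ, hadjoint_dir, Prod.mk_zero_zero])
  exact ⟨fun δq => eq_neg_of_add_eq_zero_left (hℓ (0, δq, 0)), fun δz => hadjoint_dir δz ybar,
    fun δu δq δz => eq_neg_of_add_eq_zero_left (hℓ (δu, δq, δz))⟩
end
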